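/- Let (X,d) be a metric space, t ∈ (0,1), and γ¹, γ² constant-speed geodesics with γ¹_t = γ²_t. Then d²(γ¹_0, γ²_1) + d²(γ²_0, γ¹_1) ≤ d²(γ¹_0, γ¹_1) + d²(γ²_0, γ²_1) − 2t(1−t)(l(γ¹) − l(γ²))², where l(γ) = d(γ_0, γ_1). -/

import Mathlib

/- The triangle inequality through the common point `γ¹ t = γ² t` bounds each cross distance
by a convex combination of the lengths `a` and `b`, and
`(t a + (1 - t) b)² + (t b + (1 - t) a)² = a² + b² - 2 t (1 - t) (a - b)²`. -/

def IsGeodesic {X : Type*} [MetricSpace X] (γ : ℝ → X) : Prop :=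
  ∀ a ∈ Set.Icc (0:ℝ) 1, ∀ b ∈ Set.Icc (0:ℝ) 1,
    dist (γ a) (γ b) = |a - b| * dist (γ 0) (γ 1)

namespace IsGeodesic

variable {X : Type*} [MetricSpace X] {γ γ' : ℝ → X} {t : ℝ}

theorem dist_zero_eq (h : IsGeodesic γ) (ht : t ∈ Set.Icc (0:ℝ) 1) :
    dist (γ 0) (γ t) = t * dist (γ 0) (γ 1) := by
  rw [h 0 (Set.left_mem_Icc.2 zero_le_one) t ht, zero_sub, abs_neg, abs_of_nonneg ht.1]

theorem dist_one_eq (h : IsGeodesic γ) (ht : t ∈ Set.Icc (0:ℝ) 1) :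
    dist (γ t) (γ 1) = (1 - t) * dist (γ 0) (γ 1) := by
  rw [h t ht 1 (Set.right_mem_Icc.2 zero_le_one), abs_sub_comm, abs_of_nonneg (sub_nonneg.2 ht.2)]

theorem dist_le_of_apply_eq (h : IsGeodesic γ) (h' : IsGeodesic γ')
    (ht : t ∈ Set.Icc (0:ℝ) 1) (heq : γ t = γ' t) :
    dist (γ 0) (γ' 1) ≤ t * dist (γ 0) (γ 1) + (1 - t) * dist (γ' 0) (γ' 1) :=
  calc dist (γ 0) (γ' 1) ≤ dist (γ 0) (γ t) + dist (γ t) (γ' 1) := dist_triangle _ _ _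
    _ = t * dist (γ 0) (γ 1) + (1 - t) * dist (γ' 0) (γ' 1) := by
      rw [h.dist_zero_eq ht, heq, h'.dist_one_eq ht]

end IsGeodesic

theorem sq_convexComb_add_sq_convexComb (t a b : ℝ) :
    (t * a + (1 - t) * b) ^ 2 + (t * b + (1 - t) * a) ^ 2 =
      a ^ 2 + b ^ 2 - 2 * t * (1 - t) * (a - b) ^ 2 := by
  ring

theorem stmt8 {X : Type*} [MetricSpace X]
    (γ1 γ2 : ℝ → X) (h1 : IsGeodesic γ1) (h2 : IsGeodesic γ2)
    (t : ℝ) (ht : t ∈ Set.Ioo (0:ℝ) 1)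
    (heq : γ1 t = γ2 t) :
    dist (γ1 0) (γ2 1) ^ 2 + dist (γ2 0) (γ1 1) ^ 2 ≤
      dist (γ1 0) (γ1 1) ^ 2 + dist (γ2 0) (γ2 1) ^ 2 -
        2 * t * (1 - t) * (dist (γ1 0) (γ1 1) - dist (γ2 0) (γ2 1)) ^ 2 := by
  have htI : t ∈ Set.Icc (0:ℝ) 1 := Set.Ioo_subset_Icc_self ht
  have d12 := h1.dist_le_of_apply_eq h2 htI heq
  have d21 := h2.dist_le_of_apply_eq h1 htI heq.symm
  rw [← sq_convexComb_add_sq_convexComb]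
  gcongr
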